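/- arXiv:1612.05341 — 10 statements merged into one kernel-verified Lean document; each statement's English description precedes it below -/
import Mathlib

section
/- Let r : ℤ → ℝ² be a discrete planar curve with edge tangent vectors t_k = r_{k+1} − r_k, and let k ∈ ℤ be such that det[t_{k−1}, t_k] ≠ 0, where det[u,v] denotes the determinant of the 2×2 matrix with columns u and v. Define the first and second affine curvatures κ_k = det[t_k, t_{k+1}] / det[t_{k−1}, t_k] and κ̄_k = det[t_{k−1}, t_{k+1}] / det[t_{k−1}, t_k]. Then the chain structure holds: r_{k+2} = κ_k · r_{k−1} + (−κ_k − κ̄_k) · r_k + (1 + κ̄_k) · r_{k+1}. -/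
/-!
In the plane, three vectors `u, v, w` satisfy the Cramer identity
`det[u,v] w = det[u,w] v - det[v,w] u`. Applied to `t_{k-1}, t_k, t_{k+1}` it gives the tangent
recurrence `t_{k+1} = κ̄_k t_k - κ_k t_{k-1}`; writing the tangents as differences of the points
`r_{k-1}, …, r_{k+2}` turns this into the chain structure.
-/

/-- Determinant of the 2×2 matrix with columns `u` and `v`. -/
noncomputable def det2 (u v : Fin 2 → ℝ) : ℝ := (Matrix.transpose (Matrix.of ![u, v])).det

lemma det2_apply (u v : Fin 2 → ℝ) : det2 u v = u 0 * v 1 - v 0 * u 1 := by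
  simp only [det2, Matrix.det_transpose, Matrix.det_fin_two, Matrix.of_apply, Matrix.cons_val_zero,
    Matrix.cons_val_one]
  ring

lemma det2_smul_eq_sub (u v w : Fin 2 → ℝ) :
    det2 u v • w = det2 u w • v - det2 v w • u := by
  ext i
  fin_cases i <;>
    simp only [det2_apply, Fin.zero_eta, Fin.mk_one, Pi.smul_apply, smul_eq_mul, Pi.sub_apply] <;> ring

lemma eq_div_smul_sub_div_smul_of_det2_ne_zero {u v : Fin 2 → ℝ} (huv : det2 u v ≠ 0)
    (w : Fin 2 → ℝ) :
    w = (det2 u w / det2 u v) • v - (det2 v w / det2 u v) • u := by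
  rw [div_eq_inv_mul, div_eq_inv_mul, mul_smul, mul_smul, ← smul_sub, ← det2_smul_eq_sub,
    inv_smul_smul₀ huv]

/-- Chain structure for a discrete planar curve:
`r (k+2) = κ • r (k-1) + (-κ - κ̄) • r k + (1 + κ̄) • r (k+1)`. -/
theorem koch_chain_structure (r : ℤ → Fin 2 → ℝ) (t : ℤ → Fin 2 → ℝ)
    (ht : ∀ j, t j = r (j + 1) - r j) (k : ℤ)
    (hnd : det2 (t (k - 1)) (t k) ≠ 0)
    (κ κbar : ℝ)
    (hκ : κ = det2 (t k) (t (k + 1)) / det2 (t (k - 1)) (t k))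
    (hκbar : κbar = det2 (t (k - 1)) (t (k + 1)) / det2 (t (k - 1)) (t k)) :
    r (k + 2) = κ • r (k - 1) + (-κ - κbar) • r k + (1 + κbar) • r (k + 1) := by
  have tangent_recurrence : t (k + 1) = κbar • t k - κ • t (k - 1) := by
    rw [hκ, hκbar]
    exact eq_div_smul_sub_div_smul_of_det2_ne_zero hnd _
  rw [ht, ht, ht, add_assoc, show (1 : ℤ) + 1 = 2 by norm_num, sub_add_cancel]
    at tangent_recurrence
  rw [sub_eq_iff_eq_add.mp tangent_recurrence]
  module
end

section
/- Let r : ℤ → ℝ³ be a discrete space curve with t_j = r_{j+1} − r_j, and let k ∈ ℤ satisfy det[r_{k−1}, r_k, r_{k+1}] ≠ 0. With the centroaffine curvatures κ_k = det[r_k, r_{k+1}, r_{k+2}]/det[r_{k−1}, r_k, r_{k+1}], κ̄_k = det[r_{k+1}, t_{k−1}, r_{k+2}]/det[r_{k−1}, r_k, r_{k+1}] and torsion τ_k = det[t_{k−1}, t_k, t_{k+1}]/det[r_{k−1}, r_k, r_{k+1}], the discrete Frenet–Serret formula holds: r_{k+2} = κ_k · r_{k−1} + (−κ_k − κ̄_k)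 · r_k + (τ_k + κ̄_k + 1) · r_{k+1}. -/
/-!
Since `r (k-1), r k, r (k+1)` form a basis of `ℝ³`, Cramer's rule writes `r (k+2)` in it with
coefficients `det[r (k+2), r k, r (k+1)]`, `det[r (k-1), r (k+2), r (k+1)]` and
`det[r (k-1), r k, r (k+2)]` over `det[r (k-1), r k, r (k+1)]`. Expanding the curvatures and the
torsion by multilinearity identifies these numerators with `κ`, `-κ - κ̄` and `τ + κ̄ + 1` times the
denominator.
-/

/-- Determinant of the 3×3 matrix with columns `u`, `v`, `w`. -/
noncomputable def det3 (u v w : Fin 3 → ℝ) : ℝ :=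
  (Matrix.transpose (Matrix.of ![u, v, w])).det

lemma det3_apply (u v w : Fin 3 → ℝ) :
    det3 u v w = u 0 * v 1 * w 2 - u 0 * w 1 * v 2 - v 0 * u 1 * w 2
      + v 0 * w 1 * u 2 + w 0 * u 1 * v 2 - w 0 * v 1 * u 2 := by
  simp only [det3, Matrix.det_transpose, Matrix.det_fin_three, Matrix.of_apply,
    Matrix.cons_val_zero, Matrix.cons_val_one, Matrix.cons_val_two, Matrix.head_cons,
    Matrix.tail_cons]
  ring

/-- Cramer's rule in `ℝ³`. -/
lemma det3_smul_eq (a b c d : Fin 3 → ℝ) :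
    det3 a b c • d = det3 d b c • a + det3 a d c • b + det3 a b d • c := by
  funext i
  simp only [Pi.add_apply, Pi.smul_apply, smul_eq_mul, det3_apply]
  fin_cases i <;> simp only [Fin.zero_eta, Fin.mk_one, Fin.reduceFinMk] <;> ring

lemma eq_frenet_serret_of_det3_ne_zero (a b c d : Fin 3 → ℝ) (hD : det3 a b c ≠ 0) :
    d = (det3 b c d / det3 a b c) • a
      + (-(det3 b c d / det3 a b c) - det3 c (b - a) d / det3 a b c) • b
      + (det3 (b - a) (c - b) (d - c) / det3 a b c + det3 c (b - a) d / det3 a b c + 1) • c := by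
  have hd : det3 d b c = det3 b c d := by simp only [det3_apply]; ring
  have hb : det3 a d c = -det3 b c d - det3 c (b - a) d := by
    simp only [det3_apply, Pi.sub_apply]; ring
  have hc : det3 a b d = det3 (b - a) (c - b) (d - c) + det3 c (b - a) d + det3 a b c := by
    simp only [det3_apply, Pi.sub_apply]; ring
  rw [← smul_right_inj hD, det3_smul_eq, hd, hb, hc]
  simp only [smul_add, smul_smul]
  congr 2 <;> congr 1 <;> field_simp

/-- The discrete Frenet–Serret formula:
`r (k+2) = κ • r (k-1) + (-κ - κ̄) • r k + (τ + κ̄ + 1) • r (k+1)`. -/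
theorem discrete_frenet_serret (r : ℤ → Fin 3 → ℝ) (t : ℤ → Fin 3 → ℝ)
    (ht : ∀ j, t j = r (j + 1) - r j) (k : ℤ)
    (hnd : det3 (r (k - 1)) (r k) (r (k + 1)) ≠ 0)
    (κ κbar τ : ℝ)
    (hκ : κ = det3 (r k) (r (k + 1)) (r (k + 2)) / det3 (r (k - 1)) (r k) (r (k + 1)))
    (hκbar : κbar = det3 (r (k + 1)) (t (k - 1)) (r (k + 2)) / det3 (r (k - 1)) (r k) (r (k + 1)))
    (hτ : τ = det3 (t (k - 1)) (t k) (t (k + 1)) / det3 (r (k - 1)) (r k) (r (k + 1))) :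
    r (k + 2) = κ • r (k - 1) + (-κ - κbar) • r k + (τ + κbar + 1) • r (k + 1) := by
  have htk : t (k + 1) = r (k + 2) - r (k + 1) := by rw [ht]; ring_nf
  rw [ht (k - 1), sub_add_cancel] at hκbar hτ
  rw [ht k, htk] at hτ
  subst hκ hκbar hτ
  exact eq_frenet_serret_of_det3_ne_zero _ _ _ _ hnd
end

section
/- Let r, r̄ : ℤ → ℝ³ be discrete centroaffine curves, i.e. det[r_{k−1}, r_k, r_{k+1}] ≠ 0 and det[r̄_{k−1}, r̄_k, r̄_{k+1}] ≠ 0 for all k ∈ ℤ. Then r and r̄ are centroaffine equivalent (there exists an invertible 3×3 real matrix A with r̄_k = A r_k for all k ∈ ℤ) if and only if for every k ∈ ℤ their first centroaffine curvatures, second centroaffine curvatures and centroaffine torsions agree, that is, det[r_k, r_{k+1}, r_{k+2}]/det[r_{k−1}, r_k, r_{k+1}] = det[r̄_k, r̄_{k+1}, r̄_{k+2}]/det[r̄_{k−1}, r̄_k, r̄_{k+1}], det[r_{k+1}, t_{k−1}, r_{k+2}]/det[r_{k−1}, r_k, r_{k+1}] = det[r̄_{k+1}, t̄_{k−1}, r̄_{k+2}]/det[r̄_{k−1},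 r̄_k, r̄_{k+1}], and det[t_{k−1}, t_k, t_{k+1}]/det[r_{k−1}, r_k, r_{k+1}] = det[t̄_{k−1}, t̄_k, t̄_{k+1}]/det[r̄_{k−1}, r̄_k, r̄_{k+1}], where t_j = r_{j+1} − r_j and t̄_j = r̄_{j+1} − r̄_j. -/
lemma det3_expand (u v w : Fin 3 → ℝ) :
    det3 u v w = u 0 * v 1 * w 2 - u 0 * v 2 * w 1 - u 1 * v 0 * w 2
      + u 1 * v 2 * w 0 + u 2 * v 0 * w 1 - u 2 * v 1 * w 0 := by
  rw [det3, Matrix.det_transpose, Matrix.det_fin_three]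
  simp [Matrix.of_apply]

lemma cramer3 (p q s z : Fin 3 → ℝ) (i : Fin 3) :
    det3 p q s * z i = det3 z q s * p i + det3 p z s * q i + det3 p q z * s i := by
  fin_cases i <;> (simp only [det3_expand, Fin.zero_eta, Fin.mk_one, Fin.reduceFinMk]; ring)

lemma det3_cyc (u v w : Fin 3 → ℝ) : det3 u v w = det3 v w u := by
  simp only [det3_expand]; ring

lemma idA (p q s z : Fin 3 → ℝ) :
    det3 p z s = -det3 q s z - det3 s (q - p) z := by
  simp only [det3_expand, Pi.sub_apply]; ring

lemma idB (p q s z : Fin 3 → ℝ) :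
    det3 p q z = det3 (q - p) (s - q) (z - s) - det3 q s z - det3 p z s + det3 p q s := by
  simp only [det3_expand, Pi.sub_apply]; ring

lemma det3_mulVec (A : Matrix (Fin 3) (Fin 3) ℝ) (u v w : Fin 3 → ℝ) :
    det3 (A.mulVec u) (A.mulVec v) (A.mulVec w) = A.det * det3 u v w := by
  simp only [det3_expand, Matrix.mulVec, dotProduct, Fin.sum_univ_three,
    Matrix.det_fin_three]
  ring

lemma decomp (p q s z : Fin 3 → ℝ) (hD : det3 p q s ≠ 0) :
    z = (det3 z q s / det3 p q s) • p + (det3 p z s / det3 p q s) • q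
      + (det3 p q z / det3 p q s) • s := by
  funext i
  have h := cramer3 p q s z i
  simp only [Pi.add_apply, Pi.smul_apply, smul_eq_mul]
  field_simp
  linarith [h]

lemma coeffs_eq (p q s z pb qb sb zb : Fin 3 → ℝ)
    (hD : det3 p q s ≠ 0) (hDb : det3 pb qb sb ≠ 0)
    (h1 : det3 q s z / det3 p q s = det3 qb sb zb / det3 pb qb sb)
    (h2 : det3 s (q - p) z / det3 p q s = det3 sb (qb - pb) zb / det3 pb qb sb)
    (h3 : det3 (q - p) (s - q) (z - s) / det3 p q s
        = det3 (qb - pb) (sb - qb) (zb - sb) / det3 pb qb sb) :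
    det3 z q s / det3 p q s = det3 zb qb sb / det3 pb qb sb ∧
    det3 p z s / det3 p q s = det3 pb zb sb / det3 pb qb sb ∧
    det3 p q z / det3 p q s = det3 pb qb zb / det3 pb qb sb := by
  have e1 : det3 z q s / det3 p q s = det3 zb qb sb / det3 pb qb sb := by
    rw [det3_cyc z q s, det3_cyc zb qb sb]; exact h1
  have e2 : det3 p z s / det3 p q s = det3 pb zb sb / det3 pb qb sb := by
    rw [idA p q s z, idA pb qb sb zb, sub_div, sub_div, neg_div, neg_div, h1, h2]
  refine ⟨e1, e2, ?_⟩
  rw [idB p q s z, idB pb qb sb zb, add_div, add_div, sub_div, sub_div, sub_div, sub_div,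
    h3, h1, e2, div_self hD, div_self hDb]

lemma stepLemma (A : Matrix (Fin 3) (Fin 3) ℝ) (p q s z pb qb sb zb : Fin 3 → ℝ)
    (hD : det3 p q s ≠ 0) (hDb : det3 pb qb sb ≠ 0)
    (hα : det3 q s z ≠ 0)
    (h1 : det3 q s z / det3 p q s = det3 qb sb zb / det3 pb qb sb)
    (h2 : det3 s (q - p) z / det3 p q s = det3 sb (qb - pb) zb / det3 pb qb sb)
    (h3 : det3 (q - p) (s - q) (z - s) / det3 p q s
        = det3 (qb - pb) (sb - qb) (zb - sb) / det3 pb qb sb) :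
    (pb = A.mulVec p → qb = A.mulVec q → sb = A.mulVec s → zb = A.mulVec z) ∧
    (qb = A.mulVec q → sb = A.mulVec s → zb = A.mulVec z → pb = A.mulVec p) := by
  obtain ⟨e1, e2, e3⟩ := coeffs_eq p q s z pb qb sb zb hD hDb h1 h2 h3
  set c1 := det3 z q s / det3 p q s with hc1def
  set c2 := det3 p z s / det3 p q s with hc2def
  set c3 := det3 p q z / det3 p q s with hc3def
  have hz : z = c1 • p + c2 • q + c3 • s := decomp p q s z hD
  have hzb : zb = c1 • pb + c2 • qb + c3 • sb := by
    have h := decomp pb qb sb zb hDb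
    rw [← e1, ← e2, ← e3] at h
    exact h
  have hc1 : c1 ≠ 0 := by
    rw [hc1def, det3_cyc z q s]
    exact div_ne_zero hα hD
  constructor
  · intro hp hq hs
    rw [hzb, hp, hq, hs, ← Matrix.mulVec_smul, ← Matrix.mulVec_smul, ← Matrix.mulVec_smul,
      ← Matrix.mulVec_add, ← Matrix.mulVec_add, ← hz]
  · intro hq hs hzA
    have hcp : c1 • p = z - c2 • q - c3 • s := by
      rw [hz]; funext i
      simp only [Pi.add_apply, Pi.sub_apply, Pi.smul_apply, smul_eq_mul]; ring
    have hcpb : c1 • pb = zb - c2 • qb - c3 • sb := by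
      rw [hzb]; funext i
      simp only [Pi.add_apply, Pi.sub_apply, Pi.smul_apply, smul_eq_mul]; ring
    have : c1 • pb = c1 • A.mulVec p := by
      rw [hcpb, hq, hs, hzA, ← Matrix.mulVec_smul, ← Matrix.mulVec_smul,
        ← Matrix.mulVec_sub, ← Matrix.mulVec_sub, ← hcp, Matrix.mulVec_smul]
    exact smul_right_injective (Fin 3 → ℝ) hc1 this

noncomputable def colM (u v w : Fin 3 → ℝ) : Matrix (Fin 3) (Fin 3) ℝ :=
  (Matrix.of ![u, v, w]).transpose

lemma colM_det (u v w : Fin 3 → ℝ) : (colM u v w).det = det3 u v w := rfl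

lemma colM_mulVec0 (u v w : Fin 3 → ℝ) : (colM u v w).mulVec (Pi.single 0 1) = u := by
  funext i
  simp [colM, Matrix.mulVec, dotProduct, Fin.sum_univ_three, Pi.single]

lemma colM_mulVec1 (u v w : Fin 3 → ℝ) : (colM u v w).mulVec (Pi.single 1 1) = v := by
  funext i
  simp [colM, Matrix.mulVec, dotProduct, Fin.sum_univ_three, Pi.single]

lemma colM_mulVec2 (u v w : Fin 3 → ℝ) : (colM u v w).mulVec (Pi.single 2 1) = w := by
  funext i
  simp [colM, Matrix.mulVec, dotProduct, Fin.sum_univ_three, Pi.single]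

/-- Two discrete centroaffine curves are centroaffine equivalent iff they have the same
centroaffine curvatures and torsions at every index. -/
theorem centroaffine_equiv_iff_same_invariants (r rbar : ℤ → Fin 3 → ℝ)
    (t tbar : ℤ → Fin 3 → ℝ)
    (ht : ∀ j, t j = r (j + 1) - r j) (htbar : ∀ j, tbar j = rbar (j + 1) - rbar j)
    (hnd : ∀ k : ℤ, det3 (r (k - 1)) (r k) (r (k + 1)) ≠ 0)
    (hndbar : ∀ k : ℤ, det3 (rbar (k - 1)) (rbar k) (rbar (k + 1)) ≠ 0) :
    (∃ A : Matrix (Fin 3) (Fin 3) ℝ, IsUnit A.det ∧ ∀ k : ℤ, rbar k = A.mulVec (r k)) ↔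
    (∀ k : ℤ,
      det3 (r k) (r (k + 1)) (r (k + 2)) / det3 (r (k - 1)) (r k) (r (k + 1))
        = det3 (rbar k) (rbar (k + 1)) (rbar (k + 2))
            / det3 (rbar (k - 1)) (rbar k) (rbar (k + 1)) ∧
      det3 (r (k + 1)) (t (k - 1)) (r (k + 2)) / det3 (r (k - 1)) (r k) (r (k + 1))
        = det3 (rbar (k + 1)) (tbar (k - 1)) (rbar (k + 2))
            / det3 (rbar (k - 1)) (rbar k) (rbar (k + 1)) ∧
      det3 (t (k - 1)) (t k) (t (k + 1)) / det3 (r (k - 1)) (r k) (r (k + 1))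
        = det3 (tbar (k - 1)) (tbar k) (tbar (k + 1))
            / det3 (rbar (k - 1)) (rbar k) (rbar (k + 1))) := by
  -- normalize the tangent vectors
  have ht' : ∀ k : ℤ, t (k - 1) = r k - r (k - 1) := by
    intro k; rw [ht (k - 1), show k - 1 + 1 = k from by ring]
  have ht'' : ∀ k : ℤ, t (k + 1) = r (k + 2) - r (k + 1) := by
    intro k; rw [ht (k + 1), show k + 1 + 1 = k + 2 from by ring]
  have htbar' : ∀ k : ℤ, tbar (k - 1) = rbar k - rbar (k - 1) := by
    intro k; rw [htbar (k - 1), show k - 1 + 1 = k from by ring]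
  have htbar'' : ∀ k : ℤ, tbar (k + 1) = rbar (k + 2) - rbar (k + 1) := by
    intro k; rw [htbar (k + 1), show k + 1 + 1 = k + 2 from by ring]
  have hα : ∀ k : ℤ, det3 (r k) (r (k + 1)) (r (k + 2)) ≠ 0 := by
    intro k
    have h := hnd (k + 1)
    rwa [show k + 1 - 1 = k from by ring, show k + 1 + 1 = k + 2 from by ring] at h
  constructor
  · rintro ⟨A, hA, hr⟩ k
    have hdet : A.det ≠ 0 := by
      intro h; rw [h] at hA; exact (by norm_num : ¬ IsUnit (0 : ℝ)) hA
    have htb : ∀ j, tbar j = A.mulVec (t j) := fun j => by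
      rw [htbar, hr, hr, ht, Matrix.mulVec_sub]
    refine ⟨?_, ?_, ?_⟩ <;>
      (simp only [hr, htb, det3_mulVec]; rw [mul_div_mul_left _ _ hdet])
  · intro h
    have hM : det3 (r (-1)) (r 0) (r 1) ≠ 0 := by
      have h0 := hnd 0; norm_num at h0; exact h0
    have hN : det3 (rbar (-1)) (rbar 0) (rbar 1) ≠ 0 := by
      have h0 := hndbar 0; norm_num at h0; exact h0
    set M := colM (r (-1)) (r 0) (r 1) with hMdef
    set N := colM (rbar (-1)) (rbar 0) (rbar 1) with hNdef
    have hMu : IsUnit M.det := by rw [hMdef, colM_det]; exact isUnit_iff_ne_zero.mpr hM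
    have hNu : IsUnit N.det := by rw [hNdef, colM_det]; exact isUnit_iff_ne_zero.mpr hN
    refine ⟨N * M⁻¹, ?_, ?_⟩
    · rw [Matrix.det_mul, Matrix.det_nonsing_inv, Ring.inverse_eq_inv]
      exact isUnit_iff_ne_zero.mpr (mul_ne_zero hN (inv_ne_zero hM))
    · -- base cases
      have hbase : ∀ x : Fin 3 → ℝ, ∀ e : Fin 3,
          M.mulVec e.1.succPNat = 0 → True := fun _ _ _ => trivial
      have hAbase : ∀ (u v : Fin 3 → ℝ) (e : Fin 3 → ℝ),
          M.mulVec e = u → N.mulVec e = v → v = (N * M⁻¹).mulVec u := by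
        intro u v e hu hv
        rw [← hu, ← hv, Matrix.mulVec_mulVec, Matrix.mul_assoc,
          Matrix.nonsing_inv_mul M hMu, Matrix.mul_one]
      have hBm1 : rbar (-1) = (N * M⁻¹).mulVec (r (-1)) :=
        hAbase _ _ (Pi.single 0 1) (colM_mulVec0 _ _ _) (colM_mulVec0 _ _ _)
      have hB0 : rbar 0 = (N * M⁻¹).mulVec (r 0) :=
        hAbase _ _ (Pi.single 1 1) (colM_mulVec1 _ _ _) (colM_mulVec1 _ _ _)
      have hB1 : rbar 1 = (N * M⁻¹).mulVec (r 1) :=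
        hAbase _ _ (Pi.single 2 1) (colM_mulVec2 _ _ _) (colM_mulVec2 _ _ _)
      set A := N * M⁻¹ with hAdef
      -- the step lemma specialized to index k
      have hstep : ∀ k : ℤ,
          (rbar (k-1) = A.mulVec (r (k-1)) → rbar k = A.mulVec (r k) →
            rbar (k+1) = A.mulVec (r (k+1)) → rbar (k+2) = A.mulVec (r (k+2))) ∧
          (rbar k = A.mulVec (r k) → rbar (k+1) = A.mulVec (r (k+1)) →
            rbar (k+2) = A.mulVec (r (k+2)) → rbar (k-1) = A.mulVec (r (k-1))) := by
        intro k
        obtain ⟨h1, h2, h3⟩ := h k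
        rw [ht' k, htbar' k] at h2
        rw [ht' k, ht k, ht'' k, htbar' k, htbar k, htbar'' k] at h3
        exact stepLemma A (r (k-1)) (r k) (r (k+1)) (r (k+2))
          (rbar (k-1)) (rbar k) (rbar (k+1)) (rbar (k+2))
          (hnd k) (hndbar k) (hα k) h1 h2 h3
      have key : ∀ n : ℤ, (rbar (n-1) = A.mulVec (r (n-1)) ∧ rbar n = A.mulVec (r n) ∧
          rbar (n+1) = A.mulVec (r (n+1))) := by
        intro n
        induction n using Int.induction_on with
        | zero =>
          refine ⟨?_, hB0, ?_⟩
          · rw [show (0:ℤ) - 1 = -1 from by ring]; exact hBm1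
          · rw [show (0:ℤ) + 1 = 1 from by ring]; exact hB1
        | succ n ih =>
          obtain ⟨a, b, c⟩ := ih
          refine ⟨?_, c, ?_⟩
          · rw [show (n:ℤ) + 1 - 1 = n from by ring]; exact b
          · have := (hstep n).1 a b c
            rwa [show (n:ℤ) + 2 = n + 1 + 1 from by ring] at this
        | pred n ih =>
          obtain ⟨a, b, c⟩ := ih
          refine ⟨?_, a, ?_⟩
          · have hb : rbar (-(n:ℤ)) = A.mulVec (r (-(n:ℤ))) := b
            have hc : rbar (-(n:ℤ)+1) = A.mulVec (r (-(n:ℤ)+1)) := c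
            have h2 : rbar (-(n:ℤ)-1+1) = A.mulVec (r (-(n:ℤ)-1+1)) := by
              rwa [show -(n:ℤ)-1+1 = -(n:ℤ) from by ring]
            have h3 : rbar (-(n:ℤ)-1+2) = A.mulVec (r (-(n:ℤ)-1+2)) := by
              rwa [show -(n:ℤ)-1+2 = -(n:ℤ)+1 from by ring]
            have := (hstep (-(n:ℤ)-1)).2 a h2 h3
            rwa [show -(n:ℤ)-1-1 = -(n:ℤ)-1-1 from rfl] at this
          · rw [show -(n:ℤ)-1+1 = -(n:ℤ) from by ring]; exact b
      intro k
      exact (key k).2.1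
end

section
/- Define the affine Koch code words w : ℕ → List Bool by w 2 = [true] and w (n+1) = w n ++ [false] ++ w n ++ [true] ++ w n ++ [false] ++ w n. Then for every n ≥ 2 and every position m with 1 ≤ m ≤ 2·4^{n−2} − 1, the m-th entry of w n (1-indexed) is true if and only if m = 4^i·(2k − 1) for some integers i with 0 ≤ i ≤ n − 2 and k with 1 ≤ k ≤ 4^{n−2−i}. -/
private lemma fact_pow_mul_odd (s r : ℕ) : ((2^s * (2*r+1)).factorization) 2 = s := by
  rw [Nat.factorization_mul (by positivity) (by omega)]
  have h1 : ((2:ℕ)^s).factorization 2 = s := by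
    simp [Nat.Prime.factorization_pow Nat.prime_two]
  have h2 : ((2*r+1).factorization) 2 = 0 :=
    Nat.factorization_eq_zero_of_not_dvd (by omega)
  rw [Finsupp.add_apply, h1, h2]
  omega

private lemma four_pow (t : ℕ) : (4:ℕ)^t = 2^(2*t) := by
  rw [show (4:ℕ) = 2^2 from rfl, ← pow_mul]

private lemma fact_add {t a m : ℕ} (h1 : 1 ≤ m) (h2 : m < 2*4^t)
    (ha : 2^(2*t+1) ∣ a) : ((a + m).factorization) 2 = m.factorization 2 := by
  have hm0 : m ≠ 0 := by omega
  set v := m.factorization 2 with hv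
  have hvm : 2^v ∣ m := Nat.ordProj_dvd m 2
  have hvle : v ≤ 2*t := by
    have hle : 2^v ≤ m := Nat.le_of_dvd (by omega) hvm
    by_contra h
    push_neg at h
    have h5 : (2:ℕ)^(2*t+1) ≤ 2^v := Nat.pow_le_pow_right (by norm_num) (by omega)
    have h6 : (2:ℕ)^(2*t+1) = 2*4^t := by rw [four_pow, pow_succ]; ring
    omega
  have hnd : ¬ 2^(v+1) ∣ m := Nat.pow_succ_factorization_not_dvd hm0 Nat.prime_two
  have hva : 2^(v+1) ∣ a := dvd_trans (pow_dvd_pow 2 (by omega)) ha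
  have hdvd : 2^v ∣ a + m :=
    dvd_add (dvd_trans (pow_dvd_pow 2 (Nat.le_succ v)) hva) hvm
  refine le_antisymm ?_ ?_
  · by_contra h
    push_neg at h
    have h7 : 2^(v+1) ∣ a+m :=
      (Nat.Prime.pow_dvd_iff_le_factorization Nat.prime_two (by omega)).mpr (by omega)
    exact hnd ((Nat.dvd_add_right hva).mp h7)
  · exact (Nat.Prime.pow_dvd_iff_le_factorization Nat.prime_two (by omega)).mp hdvd

private lemma P_iff {m : ℕ} (hm : m ≠ 0) :
    (∃ i j : ℕ, m = 4^i*(2*j+1)) ↔ Even (m.factorization 2) := by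
  constructor
  · rintro ⟨i, j, rfl⟩
    have h : ((4^i*(2*j+1)).factorization) 2 = 2*i := by
      rw [four_pow]; exact fact_pow_mul_odd (2*i) j
    rw [h]
    exact even_two_mul i
  · rintro ⟨i, hi⟩
    set v := m.factorization 2 with hv
    have hvi : v = 2*i := by omega
    have hdec : 2^v * (m / 2^v) = m := Nat.ordProj_mul_ordCompl_eq_self m 2
    have hodd : ¬ 2 ∣ (m / 2^v) := Nat.not_dvd_ordCompl Nat.prime_two hm
    obtain ⟨j, hj⟩ : ∃ j, m / 2^v = 2*j+1 := by
      rcases Nat.even_or_odd (m / 2^v) with he | ho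
      · exact absurd he.two_dvd hodd
      · obtain ⟨j, hj⟩ := ho; exact ⟨j, by omega⟩
    exact ⟨i, j, by rw [four_pow, ← hvi, ← hj, hdec]⟩

private lemma bridge {t m : ℕ} (h1 : 1 ≤ m) (h2 : m ≤ 2*4^t - 1) :
    (∃ i j : ℕ, m = 4^i*(2*j+1)) ↔
      ∃ i k : ℕ, i ≤ t ∧ 1 ≤ k ∧ k ≤ 4^(t-i) ∧ m = 4^i*(2*k-1) := by
  have hX : 1 ≤ (4:ℕ)^t := Nat.one_le_pow _ _ (by norm_num)
  constructor
  · rintro ⟨i, j, rfl⟩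
    have hi : i ≤ t := by
      by_contra h
      push_neg at h
      have h3 : (4:ℕ)^(t+1) ≤ 4^i := Nat.pow_le_pow_right (by norm_num) h
      have h4 : (4:ℕ)^(t+1) = 4*4^t := by rw [pow_succ]; ring
      have h5 : 4^i ≤ 4^i*(2*j+1) := Nat.le_mul_of_pos_right _ (by omega)
      omega
    have hsplit : (4:ℕ)^i * (2*4^(t-i)) = 2*4^t := by
      rw [show (4:ℕ)^t = 4^i * 4^(t-i) by rw [← pow_add]; congr 1; omega]; ring
    have hki : 2*j+1 < 2*4^(t-i) := by
      by_contra h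
      push_neg at h
      have h6 : 4^i*(2*4^(t-i)) ≤ 4^i*(2*j+1) := Nat.mul_le_mul_left _ h
      have h7 : 4^i*(2*4^(t-i)) ≤ 2*4^t - 1 := le_trans h6 h2
      omega
    refine ⟨i, j+1, hi, by omega, by omega, ?_⟩
    have he : 2*(j+1)-1 = 2*j+1 := by omega
    rw [he]
  · rintro ⟨i, k, hi, hk1, hk2, rfl⟩
    have he : 2*(k-1)+1 = 2*k-1 := by omega
    exact ⟨i, k-1, by rw [he]⟩

private lemma step_spec (a : List Bool) {L : ℕ} (hL : a.length = L) (j : ℕ) :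
    (a ++ [false] ++ a ++ [true] ++ a ++ [false] ++ a)[j]? =
      if j < L then a[j]?
      else if j = L then some false
      else if j < 2*L+1 then a[j - (L+1)]?
      else if j = 2*L+1 then some true
      else if j < 3*L+2 then a[j - (2*L+2)]?
      else if j = 3*L+2 then some false
      else a[j - (3*L+3)]? := by
  have hass : a ++ [false] ++ a ++ [true] ++ a ++ [false] ++ a
      = a ++ (false :: (a ++ (true :: (a ++ (false :: a))))) := by
    simp
  rw [hass]
  by_cases h1 : j < L
  · rw [List.getElem?_append_left (by omega : j < a.length), if_pos h1]
  · rw [List.getElem?_append_right (by omega : a.length ≤ j), hL]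
    by_cases h2 : j = L
    · have h0 : j - L = 0 := by omega
      rw [h0, List.getElem?_cons_zero, if_neg h1, if_pos h2]
    · obtain ⟨k, hk⟩ : ∃ k, j - L = k + 1 := ⟨j - L - 1, by omega⟩
      rw [hk, List.getElem?_cons_succ]
      by_cases h3 : j < 2*L+1
      · rw [List.getElem?_append_left (by omega : k < a.length),
          if_neg h1, if_neg h2, if_pos h3,
          show k = j - (L+1) by omega]
      · rw [List.getElem?_append_right (by omega : a.length ≤ k), hL]
        by_cases h4 : j = 2*L+1
        · have h0 : k - L = 0 := by omega
          rw [h0, List.getElem?_cons_zero, if_neg h1, if_neg h2, if_neg h3, if_pos h4]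
        · obtain ⟨k2, hk2⟩ : ∃ k2, k - L = k2 + 1 := ⟨k - L - 1, by omega⟩
          rw [hk2, List.getElem?_cons_succ]
          by_cases h5 : j < 3*L+2
          · rw [List.getElem?_append_left (by omega : k2 < a.length),
              if_neg h1, if_neg h2, if_neg h3, if_neg h4, if_pos h5,
              show k2 = j - (2*L+2) by omega]
          · rw [List.getElem?_append_right (by omega : a.length ≤ k2), hL]
            by_cases h6 : j = 3*L+2
            · have h0 : k2 - L = 0 := by omega
              rw [h0, List.getElem?_cons_zero, if_neg h1, if_neg h2, if_neg h3,
                if_neg h4, if_neg h5, if_pos h6]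
            · obtain ⟨k3, hk3⟩ : ∃ k3, k2 - L = k3 + 1 := ⟨k2 - L - 1, by omega⟩
              rw [hk3, List.getElem?_cons_succ, if_neg h1, if_neg h2, if_neg h3,
                if_neg h4, if_neg h5, if_neg h6,
                show k3 = j - (3*L+3) by omega]

private lemma main (w : ℕ → List Bool)
    (hw2 : w 2 = [true])
    (hstep : ∀ n, 2 ≤ n →
      w (n + 1) = w n ++ [false] ++ w n ++ [true] ++ w n ++ [false] ++ w n) :
    ∀ t : ℕ, (w (t+2)).length = 2*4^t - 1 ∧
      ∀ m, 1 ≤ m → m ≤ 2*4^t - 1 →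
        ((w (t+2))[m-1]? = some true ↔ Even (m.factorization 2)) := by
  intro t
  induction t with
  | zero =>
    refine ⟨by simp [hw2], ?_⟩
    intro m h1 h2
    have hm : m = 1 := by omega
    subst hm
    simp [hw2]
  | succ t ih =>
    obtain ⟨ihl, ihs⟩ := ih
    have hX : 1 ≤ (4:ℕ)^t := Nat.one_le_pow _ _ (by norm_num)
    have h4s : (4:ℕ)^(t+1) = 4*4^t := by rw [pow_succ]; ring
    set L := 2*4^t - 1 with hLdef
    have hS : w (t+3) = w (t+2) ++ [false] ++ w (t+2) ++ [true] ++ w (t+2)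
        ++ [false] ++ w (t+2) := hstep (t+2) (by omega)
    have hdvd1 : (2:ℕ)^(2*t+1) ∣ 2*4^t := ⟨1, by rw [four_pow, pow_succ]; ring⟩
    have hdvd2 : (2:ℕ)^(2*t+1) ∣ 4*4^t := ⟨2, by rw [four_pow, pow_succ]; ring⟩
    have hdvd3 : (2:ℕ)^(2*t+1) ∣ 6*4^t := ⟨3, by rw [four_pow, pow_succ]; ring⟩
    constructor
    · rw [hS]
      simp only [List.length_append, List.length_cons, List.length_nil, ihl]
      omega
    · intro m h1 h2
      rw [show t+1+2 = t+3 by ring, hS, step_spec (w (t+2)) ihl (m-1)]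
      by_cases c1 : m - 1 < L
      · rw [if_pos c1]
        exact ihs m h1 (by omega)
      · rw [if_neg c1]
        by_cases c2 : m - 1 = L
        · -- m = 2*4^t
          rw [if_pos c2]
          have hm : m = 2*4^t := by omega
          have hf : (m.factorization) 2 = 2*t+1 := by
            rw [hm, show 2*4^t = 2^(2*t+1) * (2*0+1) by rw [four_pow, pow_succ]; ring]
            exact fact_pow_mul_odd (2*t+1) 0
          simp only [hf]
          constructor
          · intro h; exact absurd h (by simp)
          · intro h; exact absurd h (by rw [Nat.even_iff]; omega)
        · rw [if_neg c2]
          by_cases c3 : m - 1 < 2*L+1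
          · rw [if_pos c3]
            set m' := m - (L+1) with hm'
            have hmm : m = 2*4^t + m' := by omega
            have h1' : 1 ≤ m' := by omega
            have h2' : m' ≤ L := by omega
            have hidx : m - 1 - (L+1) = m' - 1 := by omega
            rw [hidx, ihs m' h1' h2', hmm,
              fact_add h1' (by omega) hdvd1]
          · rw [if_neg c3]
            by_cases c4 : m - 1 = 2*L+1
            · rw [if_pos c4]
              have hm : m = 4*4^t := by omega
              have hf : (m.factorization) 2 = 2*t+2 := by
                rw [hm, show 4*4^t = 2^(2*t+2) * (2*0+1) by
                  rw [four_pow, pow_succ, pow_succ]; ring]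
                exact fact_pow_mul_odd (2*t+2) 0
              simp only [hf]
              constructor
              · intro _; exact ⟨t+1, by ring⟩
              · intro _; trivial
            · rw [if_neg c4]
              by_cases c5 : m - 1 < 3*L+2
              · rw [if_pos c5]
                set m' := m - (2*L+2) with hm'
                have hmm : m = 4*4^t + m' := by omega
                have h1' : 1 ≤ m' := by omega
                have h2' : m' ≤ L := by omega
                have hidx : m - 1 - (2*L+2) = m' - 1 := by omega
                rw [hidx, ihs m' h1' h2', hmm,
                  fact_add h1' (by omega) hdvd2]
              · rw [if_neg c5]
                by_cases c6 : m - 1 = 3*L+2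
                · rw [if_pos c6]
                  have hm : m = 6*4^t := by omega
                  have hf : (m.factorization) 2 = 2*t+1 := by
                    rw [hm, show 6*4^t = 2^(2*t+1) * (2*1+1) by
                      rw [four_pow, pow_succ]; ring]
                    exact fact_pow_mul_odd (2*t+1) 1
                  simp only [hf]
                  constructor
                  · intro h; exact absurd h (by simp)
                  · intro h; exact absurd h (by rw [Nat.even_iff]; omega)
                · rw [if_neg c6]
                  set m' := m - (3*L+3) with hm'
                  have hmm : m = 6*4^t + m' := by omega
                  have h1' : 1 ≤ m' := by omega
                  have h2' : m' ≤ L := by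
                    have hlen : m ≤ 2*4^(t+1) - 1 := h2
                    omega
                  have hidx : m - 1 - (3*L+3) = m' - 1 := by omega
                  rw [hidx, ihs m' h1' h2', hmm,
                    fact_add h1' (by omega) hdvd3]

/-- In the affine Koch code word at step `n`, the `m`-th entry (1-indexed) is `true`
iff `m = 4^i·(2k−1)` with `0 ≤ i ≤ n−2` and `1 ≤ k ≤ 4^(n−2−i)`. -/
theorem koch_code_sharp_positions (w : ℕ → List Bool)
    (hw2 : w 2 = [true])
    (hstep : ∀ n, 2 ≤ n →
      w (n + 1) = w n ++ [false] ++ w n ++ [true] ++ w n ++ [false] ++ w n) :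
    ∀ n, 2 ≤ n → ∀ m, 1 ≤ m → m ≤ 2 * 4 ^ (n - 2) - 1 →
      ((w n)[m - 1]? = some true ↔
        ∃ i k : ℕ, i ≤ n - 2 ∧ 1 ≤ k ∧ k ≤ 4 ^ (n - 2 - i) ∧
          m = 4 ^ i * (2 * k - 1)) := by
  intro n hn m h1 h2
  obtain ⟨t, rfl⟩ : ∃ t, n = t + 2 := ⟨n - 2, by omega⟩
  have ht : t + 2 - 2 = t := by omega
  rw [ht] at h2 ⊢
  rw [(main w hw2 hstep t).2 m h1 h2, ← P_iff (by omega), bridge h1 h2]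
end

section
/- For every integer n ≥ 2, the set S_n = { 4^{n−2−i}·(4j − 2) + 1 : i, j ∈ ℕ, 0 ≤ i ≤ n − 2, 1 ≤ j ≤ 4^i } of sequence numbers of sharp points of the Koch curve at step n has cardinality (4^{n−1} − 1)/3; equivalently, 3·|S_n| = 4^{n−1} − 1. -/
private lemma koch_aux_le (A B ja jb : ℕ) (hja : 1 ≤ ja) (hAB : A ≤ B)
    (h : 4 ^ A * (4 * ja - 2) = 4 ^ B * (4 * jb - 2)) : A = B ∧ ja = jb := by
  obtain ⟨d, rfl⟩ := Nat.exists_eq_add_of_le hAB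
  rw [pow_add, mul_assoc] at h
  have h' := Nat.eq_of_mul_eq_mul_left (Nat.pos_of_ne_zero (by positivity)) h
  cases d with
  | zero => simp at h'; omega
  | succ e =>
    rw [pow_succ, mul_comm (4 ^ e) 4, mul_assoc] at h'
    set k := 4 ^ e * (4 * jb - 2)
    omega

private lemma koch_aux (A B ja jb : ℕ) (hja : 1 ≤ ja) (hjb : 1 ≤ jb)
    (h : 4 ^ A * (4 * ja - 2) = 4 ^ B * (4 * jb - 2)) : A = B ∧ ja = jb := by
  rcases le_total A B with hAB | hBA
  · exact koch_aux_le A B ja jb hja hAB h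
  · have := koch_aux_le B A jb ja hjb hBA h.symm
    omega

private lemma koch_geom (m : ℕ) : 3 * ∑ i ∈ Finset.range m, 4 ^ i = 4 ^ m - 1 := by
  induction m with
  | zero => simp
  | succ k ih =>
    rw [Finset.sum_range_succ, pow_succ]
    have h1 : 1 ≤ 4 ^ k := Nat.one_le_pow _ _ (by norm_num)
    omega

/-- The set of sequence numbers of sharp points of the Koch curve at step `n`,
`S_n = { 4^(n−2−i)·(4j−2) + 1 : 0 ≤ i ≤ n−2, 1 ≤ j ≤ 4^i }`, has cardinality
`(4^(n−1) − 1)/3`. -/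
theorem koch_sharp_points_card (n : ℕ) (hn : 2 ≤ n) :
    3 * ({ m : ℕ | ∃ i j : ℕ, i ≤ n - 2 ∧ 1 ≤ j ∧ j ≤ 4 ^ i ∧
        m = 4 ^ (n - 2 - i) * (4 * j - 2) + 1 }).ncard = 4 ^ (n - 1) - 1 := by
  classical
  set T := (Finset.range (n - 1)).sigma (fun i => Finset.Icc 1 (4 ^ i)) with hT
  set f : (Σ _ : ℕ, ℕ) → ℕ := fun p => 4 ^ (n - 2 - p.1) * (4 * p.2 - 2) + 1 with hf
  have hset : { m : ℕ | ∃ i j : ℕ, i ≤ n - 2 ∧ 1 ≤ j ∧ j ≤ 4 ^ i ∧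
      m = 4 ^ (n - 2 - i) * (4 * j - 2) + 1 } = ↑(T.image f) := by
    ext m
    simp only [Finset.coe_image, Set.mem_image, Finset.mem_coe, Finset.mem_sigma,
      Finset.mem_range, Finset.mem_Icc, Set.mem_setOf_eq, hT, hf]
    constructor
    · rintro ⟨i, j, hi, hj1, hj2, rfl⟩
      refine ⟨⟨i, j⟩, ?_, rfl⟩
      refine ⟨?_, hj1, hj2⟩
      show i < n - 1
      omega
    · rintro ⟨⟨i, j⟩, ⟨hi, hj1, hj2⟩, rfl⟩
      refine ⟨i, j, ?_, hj1, hj2, rfl⟩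
      have : i < n - 1 := hi
      omega
  rw [hset, Set.ncard_coe_finset]
  have hinj : Set.InjOn f ↑T := by
    rintro ⟨a, ja⟩ ha ⟨b, jb⟩ hb h
    simp only [Finset.mem_coe, Finset.mem_sigma, Finset.mem_range, Finset.mem_Icc, hT]
      at ha hb
    simp only [hf, Nat.add_right_cancel_iff] at h
    have := koch_aux (n - 2 - a) (n - 2 - b) ja jb ha.2.1 hb.2.1 h
    have hab : a = b := by omega
    subst hab
    simp [this.2]
  rw [Finset.card_image_of_injOn hinj, hT, Finset.card_sigma]
  simp only [Nat.card_Icc]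
  have : ∀ i ∈ Finset.range (n - 1), 4 ^ i + 1 - 1 = 4 ^ i := fun i _ => by simp
  rw [Finset.sum_congr rfl this, koch_geom]
end

section
/- Define the affine Koch snowflake code words s : ℕ → List Bool by s 2 = List.replicate 6 true and s (n+1) = ((s n).map (fun a => [a, true, false, true])).join. Then for every n ≥ 2 and every position p with 1 ≤ p ≤ 6·4^{n−2}, the p-th entry of s n (1-indexed) is true if and only if p = 4^l·(2k − 1) + 1 for some integers l, k with 0 ≤ l ≤ n − 2 and 1 ≤ k ≤ 3·4^{n−2−l}, or p = 4^{n−1}·(k − 1)/2 + 1 for some k ∈ {1, 2, 3}. -/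
lemma getflat (L : List Bool) (i : ℕ) :
    ((L.map (fun a => [a, true, false, true])).flatten)[i]? =
      if i / 4 < L.length then
        some (if i % 4 = 0 then L[i/4]! else decide (¬ i % 4 = 2))
      else none := by
  induction L generalizing i with
  | nil => simp
  | cons a L ih =>
    match i with
    | 0 => simp
    | 1 => simp
    | 2 => simp
    | 3 => simp
    | (j+4) =>
      have h1 : (j+4) % 4 = j % 4 := Nat.add_mod_right j 4
      have h2 : (j+4) / 4 = j / 4 + 1 := Nat.add_div_right j (by norm_num)
      simp only [List.map_cons, List.flatten_cons, List.cons_append,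
        List.nil_append, List.getElem?_cons_succ, ih, h1, h2,
        List.length_cons, Nat.add_lt_add_iff_right, List.getElem!_cons_succ]

lemma koch_len (s : ℕ → List Bool)
    (hs2 : s 2 = List.replicate 6 true)
    (hstep : ∀ n, 2 ≤ n →
      s (n + 1) = ((s n).map (fun a => [a, true, false, true])).flatten) :
    ∀ n, 2 ≤ n → (s n).length = 6 * 4 ^ (n - 2) := by
  intro n hn
  induction n, hn using Nat.le_induction with
  | base => simp [hs2]
  | succ n hn ih =>
    rw [hstep n hn, List.length_flatten]
    have : ∀ a : Bool, ([a, true, false, true]).length = 4 := by intro a; rfl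
    simp only [List.map_map, Function.comp_def, this, List.map_const', List.sum_replicate,
      smul_eq_mul, ih]
    have h2 : n + 1 - 2 = (n - 2) + 1 := by omega
    rw [h2, pow_succ]; ring

lemma koch_char (s : ℕ → List Bool)
    (hs2 : s 2 = List.replicate 6 true)
    (hstep : ∀ n, 2 ≤ n →
      s (n + 1) = ((s n).map (fun a => [a, true, false, true])).flatten) :
    ∀ n, 2 ≤ n → ∀ i, i < 6 * 4 ^ (n - 2) →
      ((s n)[i]? = some true ↔
        (i = 0 ∨ i = 2 * 4 ^ (n - 2) ∨ ∃ l m : ℕ, m % 2 = 1 ∧ i = 4 ^ l * m)) := by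
  intro n hn
  induction n, hn using Nat.le_induction with
  | base =>
    intro i hi
    simp only [show (2:ℕ) - 2 = 0 from rfl, pow_zero, mul_one] at hi ⊢
    interval_cases i
    · simp [hs2]
    · simp only [hs2, List.getElem?_replicate]
      norm_num
      exact ⟨0, 1, by norm_num⟩
    · simp only [hs2, List.getElem?_replicate]
      norm_num
    · simp only [hs2, List.getElem?_replicate]
      norm_num
      exact ⟨0, 3, by norm_num⟩
    · simp only [hs2, List.getElem?_replicate]
      norm_num
      exact ⟨1, 1, by norm_num⟩
    · simp only [hs2, List.getElem?_replicate]
      norm_num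
      exact ⟨0, 5, by norm_num⟩
  | succ n hn ih =>
    intro i hi
    have hlen : (s n).length = 6 * 4 ^ (n - 2) := koch_len s hs2 hstep n hn
    have hpow : 4 ^ (n + 1 - 2) = 4 * 4 ^ (n - 2) := by
      rw [show n + 1 - 2 = (n - 2) + 1 from by omega, pow_succ]; ring
    have hidiv : i / 4 < 6 * 4 ^ (n - 2) := by omega
    rw [hstep n hn, getflat, if_pos (by omega : i / 4 < (s n).length)]
    have hget : (s n)[i/4]? = some ((s n)[i/4]!) := by
      rw [getElem!_pos _ _ (by omega), List.getElem?_eq_getElem]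
    have key := (ih (i/4) hidiv)
    rw [hget] at key
    have h4 : i % 4 = 0 ∨ i % 4 = 1 ∨ i % 4 = 2 ∨ i % 4 = 3 := by omega
    rcases h4 with h4 | h4 | h4 | h4
    · -- i divisible by 4
      rw [if_pos h4, key]
      have hi4 : i = 4 * (i / 4) := by omega
      constructor
      · rintro (h0 | h2 | ⟨l, m, hm, hlm⟩)
        · left; omega
        · right; left; omega
        · right; right
          exact ⟨l + 1, m, hm, by rw [pow_succ, hi4, hlm]; ring⟩
      · rintro (h0 | h2 | ⟨l, m, hm, hlm⟩)
        · left; omega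
        · right; left; omega
        · right; right
          match l with
          | 0 => simp only [pow_zero, one_mul] at hlm; omega
          | l + 1 =>
            refine ⟨l, m, hm, ?_⟩
            rw [pow_succ] at hlm
            have : i = 4 * (4 ^ l * m) := by rw [hlm]; ring
            omega
    · rw [if_neg (by omega)]
      simp only [h4, Option.some_inj]
      norm_num
      right; right; exact ⟨0, i, by omega, by rw [pow_zero, one_mul]⟩
    · rw [if_neg (by omega)]
      simp only [h4]
      norm_num
      push_neg
      refine ⟨by omega, by omega, ?_⟩
      rintro l m hm hlm
      match l with
      | 0 => simp only [pow_zero, one_mul] at hlm; omega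
      | l + 1 =>
        rw [pow_succ] at hlm
        have : i = 4 * (4 ^ l * m) := by rw [hlm]; ring
        omega
    · rw [if_neg (by omega)]
      simp only [h4, Option.some_inj]
      norm_num
      right; right; exact ⟨0, i, by omega, by rw [pow_zero, one_mul]⟩

lemma koch_bridge (n p : ℕ) (hn : 2 ≤ n) (hp : 1 ≤ p) (hp2 : p ≤ 6 * 4 ^ (n - 2)) :
    (p - 1 = 0 ∨ p - 1 = 2 * 4 ^ (n - 2) ∨ ∃ l m : ℕ, m % 2 = 1 ∧ p - 1 = 4 ^ l * m) ↔
      ((∃ l k : ℕ, l ≤ n - 2 ∧ 1 ≤ k ∧ k ≤ 3 * 4 ^ (n - 2 - l) ∧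
          p = 4 ^ l * (2 * k - 1) + 1) ∨
       (∃ k : ℕ, k ∈ ({1, 2, 3} : Set ℕ) ∧ p = 4 ^ (n - 1) * (k - 1) / 2 + 1)) := by
  obtain ⟨N, rfl⟩ : ∃ N, n = N + 2 := ⟨n - 2, by omega⟩
  have e1 : N + 2 - 2 = N := by omega
  have e2 : N + 2 - 1 = N + 1 := by omega
  rw [e1] at hp2 ⊢
  rw [e2]
  have hps : 4 ^ (N + 1) = 4 * 4 ^ N := by rw [pow_succ]; ring
  constructor
  · rintro (h0 | h2 | ⟨l, m, hm, hlm⟩)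
    · right; exact ⟨1, by simp, by simp; omega⟩
    · right; refine ⟨2, by simp, ?_⟩
      simp only [show (2:ℕ) - 1 = 1 from rfl, mul_one]
      omega
    · -- p - 1 = 4^l * m, m odd
      by_cases hl : l ≤ N
      · left
        refine ⟨l, (m + 1) / 2, hl, by omega, ?_, ?_⟩
        · -- (m+1)/2 ≤ 3 * 4^(N - l)
          have hsplit : 4 ^ N = 4 ^ l * 4 ^ (N - l) := by
            rw [← pow_add]; congr 1; omega
          have : 4 ^ l * m < 4 ^ l * (6 * 4 ^ (N - l)) := by
            calc 4 ^ l * m = p - 1 := hlm.symm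
              _ < 6 * 4 ^ N := by omega
              _ = 4 ^ l * (6 * 4 ^ (N - l)) := by rw [hsplit]; ring
          have hmlt : m < 6 * 4 ^ (N - l) := lt_of_mul_lt_mul_left this (Nat.zero_le _)
          omega
        · rw [show 2 * ((m + 1) / 2) - 1 = m from by omega]
          omega
      · -- l > N
        right
        have hlN : N + 1 ≤ l := by omega
        have hb1 : 4 ^ (N + 1) ≤ 4 ^ l := Nat.pow_le_pow_right (by norm_num) hlN
        have hml : 4 ^ l * 1 ≤ 4 ^ l * m := Nat.mul_le_mul_left _ (by omega)
        have h3 : m = 1 := by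
          by_contra hm3
          have : 3 ≤ m := by omega
          have : 4 ^ l * 3 ≤ 4 ^ l * m := Nat.mul_le_mul_left _ this
          omega
        have hl1 : l = N + 1 := by
          by_contra hl2
          have : N + 2 ≤ l := by omega
          have : 4 ^ (N + 2) ≤ 4 ^ l := Nat.pow_le_pow_right (by norm_num) this
          have h42 : 4 ^ (N + 2) = 16 * 4 ^ N := by rw [pow_add]; ring
          omega
        refine ⟨3, by simp, ?_⟩
        subst hl1 h3
        simp only [show (3:ℕ) - 1 = 2 from rfl]
        omega
  · rintro (⟨l, k, hl, hk1, hk2, hpe⟩ | ⟨k, hk, hpe⟩)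
    · right; right
      exact ⟨l, 2 * k - 1, by omega, by omega⟩
    · simp only [Set.mem_insert_iff, Set.mem_singleton_iff] at hk
      rcases hk with rfl | rfl | rfl
      · left; omega
      · right; left
        simp only [show (2:ℕ) - 1 = 1 from rfl, mul_one] at hpe
        omega
      · right; right
        refine ⟨N + 1, 1, by norm_num, ?_⟩
        simp only [show (3:ℕ) - 1 = 2 from rfl] at hpe
        omega

/-- In the affine Koch snowflake code word at step `n`, the `p`-th entry (1-indexed)
is `true` iff `p = 4^l·(2k−1) + 1` with `0 ≤ l ≤ n−2`, `1 ≤ k ≤ 3·4^(n−2−l)`, or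
`p = 4^(n−1)·(k−1)/2 + 1` with `k ∈ {1,2,3}`. -/
theorem koch_snowflake_sharp_positions (s : ℕ → List Bool)
    (hs2 : s 2 = List.replicate 6 true)
    (hstep : ∀ n, 2 ≤ n →
      s (n + 1) = ((s n).map (fun a => [a, true, false, true])).flatten) :
    ∀ n, 2 ≤ n → ∀ p, 1 ≤ p → p ≤ 6 * 4 ^ (n - 2) →
      ((s n)[p - 1]? = some true ↔
        (∃ l k : ℕ, l ≤ n - 2 ∧ 1 ≤ k ∧ k ≤ 3 * 4 ^ (n - 2 - l) ∧
            p = 4 ^ l * (2 * k - 1) + 1) ∨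
        (∃ k : ℕ, k ∈ ({1, 2, 3} : Set ℕ) ∧ p = 4 ^ (n - 1) * (k - 1) / 2 + 1)) := by
  intro n hn p hp hp2
  rw [koch_char s hs2 hstep n hn (p - 1) (by omega)]
  exact koch_bridge n p hn hp hp2
end

section
/- Let N : ℕ → ℤ satisfy N 1 = 4 and, for every k ≥ 1, N (2k) = 4·N (2k − 1) − 2 and N (2k + 1) = 4·N (2k) − 4. Then for every n ≥ 1: if n is odd, 5·N n = 4^{n+1} + 4, and if n is even, 5·N n = 4^{n+1} + 6. -/
/-- Closed form for the number of inflection points of the Hilbert curve: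
`5·N n = 4^(n+1) + 4` when `n` is odd and `5·N n = 4^(n+1) + 6` when `n` is even. -/
theorem hilbert_inflection_count (N : ℕ → ℤ)
    (hN1 : N 1 = 4)
    (heven : ∀ k : ℕ, 1 ≤ k → N (2 * k) = 4 * N (2 * k - 1) - 2)
    (hodd : ∀ k : ℕ, 1 ≤ k → N (2 * k + 1) = 4 * N (2 * k) - 4) :
    ∀ n : ℕ, 1 ≤ n →
      (Odd n → 5 * N n = 4 ^ (n + 1) + 4) ∧
      (Even n → 5 * N n = 4 ^ (n + 1) + 6) := by
  have aux : ∀ k : ℕ, 1 ≤ k →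
      5 * N (2 * k - 1) = 4 ^ (2 * k) + 4 ∧ 5 * N (2 * k) = 4 ^ (2 * k + 1) + 6 := by
    intro k hk
    induction k, hk using Nat.le_induction with
    | base =>
      constructor
      · norm_num [hN1]
      · have := heven 1 le_rfl
        norm_num at this
        norm_num [this, hN1]
    | succ k hk ih =>
      obtain ⟨ih1, ih2⟩ := ih
      have h1 : 2 * (k + 1) - 1 = 2 * k + 1 := by omega
      have hodd' := hodd k hk
      have heven' := heven (k + 1) (by omega)
      rw [h1] at heven' ⊢
      constructor
      · rw [hodd']
        have : 5 * (4 * N (2 * k) - 4) = 4 * (5 * N (2 * k)) - 20 := by ring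
        rw [this, ih2]
        ring
      · rw [heven', hodd']
        have : 5 * (4 * (4 * N (2 * k) - 4) - 2) = 16 * (5 * N (2 * k)) - 90 := by ring
        rw [this, ih2]
        ring
  intro n hn
  constructor
  · rintro ⟨m, hm⟩
    have hm' : n = 2 * (m + 1) - 1 := by omega
    have := (aux (m + 1) (by omega)).1
    rw [hm'] at *
    have hpow : 2 * (m + 1) - 1 + 1 = 2 * (m + 1) := by omega
    rw [hpow]
    exact this
  · rintro ⟨m, hm⟩
    have hm1 : 1 ≤ m := by omega
    have := (aux m hm1).2
    have hn' : n = 2 * m := by omega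
    rw [hn']
    exact this
end

section
/- Let the Hilbert letter words K : ℕ → List L over the five-letter alphabet L = {P, S, T, U, V} be defined by K 2 = [P], K (2m+1) = K (2m) ++ [S] ++ K (2m) ++ [T] ++ K (2m) ++ [U] ++ K (2m) for m ≥ 1, and K (2m) = K (2m−1) ++ [U] ++ K (2m−1) ++ [V] ++ K (2m−1) ++ [S] ++ K (2m−1) for m ≥ 2. Assign weights w(P) = 3, w(S) = 2, w(T) = 1, w(U) = 2, w(V) = 3 (the number of symbols from {1,A,B,C,D} each letter expands to). Then for every n ≥ 2, the total symbol length y n = 2 + Σ_{letters x of K n} w(x) satisfies: 5·y n = 6·4^{n−1} + 1 if n is even, and 5·y n = 6·4^{n−1} − 1 if n is odd. -/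
/-- The five-letter alphabet of the affine Hilbert curve code. -/
inductive HLetter : Type
  | P | S | T | U | V
  deriving DecidableEq

open HLetter in
/-- The number of symbols from `{1, A, B, C, D}` each letter expands to. -/
def HLetter.weight : HLetter → ℕ
  | P => 3
  | S => 2
  | T => 1
  | U => 2
  | V => 3

open HLetter in
/-- The total symbol length `y n = 2 + Σ w(x)` of the affine Hilbert code at step `n`
satisfies `5·y n = 6·4^(n−1) + 1` for even `n` and `5·y n = 6·4^(n−1) − 1` for odd `n`. -/
theorem hilbert_code_symbol_length (K : ℕ → List HLetter)
    (hK2 : K 2 = [P])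
    (hodd : ∀ m : ℕ, 1 ≤ m →
      K (2 * m + 1) = K (2 * m) ++ [S] ++ K (2 * m) ++ [T] ++ K (2 * m) ++ [U] ++ K (2 * m))
    (heven : ∀ m : ℕ, 2 ≤ m →
      K (2 * m) = K (2 * m - 1) ++ [U] ++ K (2 * m - 1) ++ [V] ++ K (2 * m - 1)
        ++ [S] ++ K (2 * m - 1)) :
    ∀ n : ℕ, 2 ≤ n →
      (Even n → 5 * (2 + ((K n).map HLetter.weight).sum) = 6 * 4 ^ (n - 1) + 1) ∧
      (Odd n → 5 * (2 + ((K n).map HLetter.weight).sum) = 6 * 4 ^ (n - 1) - 1) := by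
  have key : ∀ m : ℕ, 1 ≤ m →
      5 * (2 + ((K (2 * m)).map HLetter.weight).sum) = 6 * 4 ^ (2 * m - 1) + 1 ∧
      5 * (2 + ((K (2 * m + 1)).map HLetter.weight).sum) = 6 * 4 ^ (2 * m) - 1 := by
    intro m hm
    induction m with
    | zero => omega
    | succ k ih =>
      rcases Nat.lt_or_ge k 1 with hk | hk
      · have hk0 : k = 0 := by omega
        subst hk0
        constructor
        · norm_num [hK2, HLetter.weight]
        · rw [show 2 * 1 + 1 = 2 * 1 + 1 from rfl, hodd 1 le_rfl]
          norm_num [hK2, HLetter.weight]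
      · obtain ⟨ih1, ih2⟩ := ih hk
        have h2k1 : 2 * (k + 1) - 1 = 2 * k + 1 := by omega
        have hev : K (2 * (k + 1)) = K (2 * k + 1) ++ [U] ++ K (2 * k + 1) ++ [V]
            ++ K (2 * k + 1) ++ [S] ++ K (2 * k + 1) := by
          rw [heven (k + 1) (by omega), h2k1]
        have hod := hodd (k + 1) (by omega)
        -- powers of 4
        have ha : (1 : ℕ) ≤ 4 ^ (2 * k - 1) := Nat.one_le_pow _ _ (by norm_num)
        have hp1 : 4 ^ (2 * k) = 4 * 4 ^ (2 * k - 1) := by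
          rw [← pow_succ']; congr 1; omega
        have hp2 : 4 ^ (2 * (k + 1) - 1) = 16 * 4 ^ (2 * k - 1) := by
          rw [show (16 : ℕ) = 4 ^ 2 from rfl, ← pow_add]; congr 1; omega
        have hp3 : 4 ^ (2 * (k + 1)) = 64 * 4 ^ (2 * k - 1) := by
          rw [show (64 : ℕ) = 4 ^ 3 from rfl, ← pow_add]; congr 1; omega
        have hs1 : ((K (2 * (k + 1))).map HLetter.weight).sum =
            4 * ((K (2 * k + 1)).map HLetter.weight).sum + 7 := by
          rw [hev]; simp [HLetter.weight]; ring
        have hs2 : ((K (2 * (k + 1) + 1)).map HLetter.weight).sum =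
            4 * ((K (2 * (k + 1))).map HLetter.weight).sum + 5 := by
          rw [hod]; simp [HLetter.weight]; ring
        rw [hs1, hs2, hp2, hp3]
        rw [hp1] at ih2
        omega
  intro n hn
  constructor
  · rintro ⟨m, rfl⟩
    have hm : 1 ≤ m := by omega
    have := (key m hm).1
    rwa [two_mul] at this
  · rintro ⟨m, rfl⟩
    have hm : 1 ≤ m := by omega
    exact (key m hm).2
end

section
/- Let the Hilbert letter words K : ℕ → List L over the five-letter alphabet L = {P, S, T, U, V} be defined by K 2 = [P], K (2m+1) = K (2m) ++ [S] ++ K (2m) ++ [T] ++ K (2m) ++ [U] ++ K (2m) for m ≥ 1, and K (2m) = K (2m−1) ++ [U] ++ K (2m−1) ++ [V] ++ K (2m−1) ++ [S] ++ K (2m−1) for m ≥ 2. Then for every n ≥ 2 the word K n has exactly 2·4^{n−2} − 1 letters; moreover, if n = 2m is even, K n contains 4^{2m−2} letters P, (4^{2m−2} − 1)/15 letters V, (4^{2m−1} − 4)/15 letters T, (4^{2m−2} − 1)/3 letters S and (4^{2m−2} − 1)/3 letters U; and if n = 2m+1 is odd, K n contains 4^{2m−1} letters P, (4^{2m−1}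 − 4)/15 letters V, (4^{2m} − 1)/15 letters T, (4^{2m−1} − 1)/3 letters S and (4^{2m−1} − 1)/3 letters U. -/
open HLetter in
/-- Letter counts in the Hilbert letter word `K n`. -/
theorem hilbert_letter_counts (K : ℕ → List HLetter)
    (hK2 : K 2 = [P])
    (hodd : ∀ m : ℕ, 1 ≤ m →
      K (2 * m + 1) = K (2 * m) ++ [S] ++ K (2 * m) ++ [T] ++ K (2 * m) ++ [U] ++ K (2 * m))
    (heven : ∀ m : ℕ, 2 ≤ m →
      K (2 * m) = K (2 * m - 1) ++ [U] ++ K (2 * m - 1) ++ [V] ++ K (2 * m - 1)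
        ++ [S] ++ K (2 * m - 1)) :
    ∀ n : ℕ, 2 ≤ n →
      (K n).length = 2 * 4 ^ (n - 2) - 1 ∧
      (∀ m : ℕ, n = 2 * m →
        (K n).count P = 4 ^ (2 * m - 2) ∧
        15 * (K n).count V = 4 ^ (2 * m - 2) - 1 ∧
        15 * (K n).count T = 4 ^ (2 * m - 1) - 4 ∧
        3 * (K n).count S = 4 ^ (2 * m - 2) - 1 ∧
        3 * (K n).count U = 4 ^ (2 * m - 2) - 1) ∧
      (∀ m : ℕ, n = 2 * m + 1 →
        (K n).count P = 4 ^ (2 * m - 1) ∧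
        15 * (K n).count V = 4 ^ (2 * m - 1) - 4 ∧
        15 * (K n).count T = 4 ^ (2 * m) - 1 ∧
        3 * (K n).count S = 4 ^ (2 * m - 1) - 1 ∧
        3 * (K n).count U = 4 ^ (2 * m - 1) - 1) := by
  have main : ∀ m : ℕ, 1 ≤ m →
      ((K (2*m)).length = 2 * 4 ^ (2*m-2) - 1 ∧
       (K (2*m)).count P = 4 ^ (2*m-2) ∧
       15 * (K (2*m)).count V = 4 ^ (2*m-2) - 1 ∧
       15 * (K (2*m)).count T = 4 ^ (2*m-1) - 4 ∧
       3 * (K (2*m)).count S = 4 ^ (2*m-2) - 1 ∧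
       3 * (K (2*m)).count U = 4 ^ (2*m-2) - 1) ∧
      ((K (2*m+1)).length = 2 * 4 ^ (2*m-1) - 1 ∧
       (K (2*m+1)).count P = 4 ^ (2*m-1) ∧
       15 * (K (2*m+1)).count V = 4 ^ (2*m-1) - 4 ∧
       15 * (K (2*m+1)).count T = 4 ^ (2*m) - 1 ∧
       3 * (K (2*m+1)).count S = 4 ^ (2*m-1) - 1 ∧
       3 * (K (2*m+1)).count U = 4 ^ (2*m-1) - 1) := by
    intro m hm
    induction m, hm using Nat.le_induction with
    | base =>
      have h3 := hodd 1 le_rfl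
      norm_num [hK2] at h3 ⊢
      rw [h3]
      refine ⟨?_, ?_, ?_, ?_, ?_, ?_⟩ <;> decide
    | succ m hm ih =>
      obtain ⟨-, hl', hp', hv', ht', hs', hu'⟩ := ih
      have key := heven (m+1) (by omega)
      rw [show 2*(m+1)-1 = 2*m+1 from by omega] at key
      have key2 := hodd (m+1) (by omega)
      have q2 : (4:ℕ)^(2*(m+1)-2) = 4 * 4^(2*m-1) := by
        rw [show 2*(m+1)-2 = (2*m-1)+1 from by omega, pow_succ]; ring
      have q3 : (4:ℕ)^(2*(m+1)-1) = 16 * 4^(2*m-1) := by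
        rw [show 2*(m+1)-1 = (2*m-1)+2 from by omega, pow_add]; ring
      have q4 : (4:ℕ)^(2*(m+1)) = 64 * 4^(2*m-1) := by
        rw [show 2*(m+1) = (2*m-1)+3 from by omega, pow_add]; ring
      have q1 : (4:ℕ)^(2*m) = 4 * 4^(2*m-1) := by
        conv_lhs => rw [show 2*m = (2*m-1)+1 from by omega]
        rw [pow_succ]; ring
      have ha : 1 ≤ (4:ℕ)^(2*m-1) := Nat.one_le_pow _ _ (by norm_num)
      have hE : (K (2*(m+1))).length = 2 * 4 ^ (2*(m+1)-2) - 1 ∧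
          (K (2*(m+1))).count P = 4 ^ (2*(m+1)-2) ∧
          15 * (K (2*(m+1))).count V = 4 ^ (2*(m+1)-2) - 1 ∧
          15 * (K (2*(m+1))).count T = 4 ^ (2*(m+1)-1) - 4 ∧
          3 * (K (2*(m+1))).count S = 4 ^ (2*(m+1)-2) - 1 ∧
          3 * (K (2*(m+1))).count U = 4 ^ (2*(m+1)-2) - 1 := by
        rw [key]
        simp only [List.count_append, List.length_append, List.length_singleton,
          List.count_cons, List.count_nil, beq_iff_eq, reduceCtorEq, reduceIte, if_false]
        refine ⟨?_, ?_, ?_, ?_, ?_, ?_⟩ <;> omega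
      obtain ⟨hL, hP, hV, hT, hS, hU⟩ := hE
      refine ⟨⟨hL, hP, hV, hT, hS, hU⟩, ?_⟩
      rw [key2]
      simp only [List.count_append, List.length_append, List.length_singleton,
        List.count_cons, List.count_nil, beq_iff_eq, reduceCtorEq, reduceIte, if_false]
      refine ⟨?_, ?_, ?_, ?_, ?_, ?_⟩ <;> omega
  intro n hn
  obtain ⟨m, rfl | rfl⟩ := Nat.even_or_odd' n
  · have hm1 : 1 ≤ m := by omega
    obtain ⟨⟨hl, hp, hv, ht, hs, hu⟩, -⟩ := main m hm1
    refine ⟨by rw [show 2*m-2 = 2*m-2 from rfl] at hl; exact hl, ?_, ?_⟩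
    · intro m' hm'
      have : m' = m := by omega
      subst this
      exact ⟨hp, hv, ht, hs, hu⟩
    · intro m' hm'
      exact absurd hm' (by omega)
  · have hm1 : 1 ≤ m := by omega
    obtain ⟨-, ⟨hl, hp, hv, ht, hs, hu⟩⟩ := main m hm1
    refine ⟨by rwa [show 2*m+1-2 = 2*m-1 from by omega], ?_, ?_⟩
    · intro m' hm'
      exact absurd hm' (by omega)
    · intro m' hm'
      have : m' = m := by omega
      subst this
      exact ⟨hp, hv, ht, hs, hu⟩
end

section
/- Let the Hilbert letter words K : ℕ → List L over the five-letter alphabet L = {P, S, T, U, V} be defined by K 2 = [P], K (2m+1) = K (2m) ++ [S] ++ K (2m) ++ [T] ++ K (2m) ++ [U] ++ K (2m) for m ≥ 1, and K (2m) = K (2m−1) ++ [U] ++ K (2m−1) ++ [V] ++ K (2m−1) ++ [S] ++ K (2m−1) for m ≥ 2. Then for every n ≥ 2 and every 1-indexed position idx with 1 ≤ idx ≤ 2·4^{n−2} − 1, the letter of K n at position idx is: P if and only if idx = 2k − 1 for some k ≥ 1; T if and only if idx = 4^{2l−1}·(2k − 1) for some l ≥ 1, k ≥ 1; V if and only if idx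 = 4^{2l}·(2k − 1) for some l ≥ 1, k ≥ 1; S if and only if idx = 4^{2l−2}·(8k − 6) or idx = 4^{2l−1}·(8k − 2) for some l ≥ 1, k ≥ 1; and U if and only if idx = 4^{2l−2}·(8k − 2) or idx = 4^{2l−1}·(8k − 6) for some l ≥ 1, k ≥ 1. -/
open HLetter

def shift : HLetter → HLetter
  | P => T | T => V | V => T | S => U | U => S

def f (x : ℕ) : HLetter :=
  if x % 2 = 1 then P
  else if x % 8 = 2 then S
  else if x % 8 = 6 then U
  else if h : x = 0 then P
  else shift (f (x / 4))
decreasing_by exact Nat.div_lt_self (Nat.pos_of_ne_zero h) (by norm_num)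

lemma f_odd {x : ℕ} (h : x % 2 = 1) : f x = P := by rw [f]; simp [h]

lemma f_two {x : ℕ} (h : x % 8 = 2) : f x = S := by
  rw [f]; have : x % 2 = 0 := by omega
  simp [this, h]

lemma f_six {x : ℕ} (h : x % 8 = 6) : f x = U := by
  rw [f]; have : x % 2 = 0 := by omega
  simp [this, h]

lemma f_four {x : ℕ} (h : 1 ≤ x) : f (4 * x) = shift (f x) := by
  rw [f]
  have h2 : (4 * x) % 2 = 0 := by omega
  have h8 : (4 * x) % 8 = 0 ∨ (4 * x) % 8 = 4 := by omega
  have h0 : 4 * x ≠ 0 := by omega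
  have hd : 4 * x / 4 = x := by omega
  rcases h8 with h8 | h8 <;> simp [h2, h8, h0, hd]

lemma shift2 {x : HLetter} (h : x ≠ P) : shift (shift x) = x := by
  cases x <;> first | exact absurd rfl h | rfl

lemma shift_iter2 (j : ℕ) {x : HLetter} (h : x ≠ P) : shift^[2 * j] x = x := by
  induction j with
  | zero => rfl
  | succ j ih =>
    have : 2 * (j + 1) = 2 * j + 1 + 1 := by ring
    rw [this, Function.iterate_succ_apply', Function.iterate_succ_apply', ih, shift2 h]

lemma f_pow4 (a : ℕ) {m : ℕ} (hm : 1 ≤ m) : f (4 ^ a * m) = shift^[a] (f m) := by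
  induction a with
  | zero => simp
  | succ a ih =>
    have h1 : 4 ^ (a + 1) * m = 4 * (4 ^ a * m) := by ring
    have h2 : 1 ≤ 4 ^ a * m := Nat.one_le_iff_ne_zero.mpr (by positivity)
    rw [h1, f_four h2, ih, Function.iterate_succ_apply']

lemma f_inv (e : ℕ) : ∀ x j : ℕ, 1 ≤ x → x < 2 * 4 ^ e → f (x + 2 * 4 ^ e * j) = f x := by
  induction e with
  | zero =>
    intro x j h1 h2
    have hx : x = 1 := by omega
    subst hx
    rw [f_odd (by omega), f_odd (by omega)]
  | succ e ih =>
    intro x j h1 h2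
    have key : 2 * 4 ^ (e + 1) * j = 8 * (4 ^ e * j) := by ring
    rw [key]
    set c := 4 ^ e * j with hc
    by_cases ho : x % 2 = 1
    · rw [f_odd (by omega), f_odd ho]
    · by_cases h8 : x % 8 = 2
      · rw [f_two (by omega), f_two h8]
      · by_cases h8' : x % 8 = 6
        · rw [f_six (by omega), f_six h8']
        · -- x % 4 = 0
          have h4 : x % 4 = 0 := by omega
          obtain ⟨y, hy⟩ : ∃ y, x = 4 * y := ⟨x / 4, by omega⟩
          have hy1 : 1 ≤ y := by omega
          have hy2 : y < 2 * 4 ^ e := by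
            have : 4 * y < 2 * (4 ^ e * 4) := by
              have : (4:ℕ) ^ (e+1) = 4 ^ e * 4 := pow_succ 4 e
              omega
            omega
          have : x + 8 * c = 4 * (y + 2 * 4 ^ e * j) := by rw [hy, hc]; ring
          rw [this, f_four (by omega), ih y j hy1 hy2, hy, f_four hy1]

-- shift iterate values
lemma iter_P_odd {l : ℕ} (hl : 1 ≤ l) : shift^[2 * l - 1] P = T := by
  have : 2 * l - 1 = 2 * (l - 1) + 1 := by omega
  rw [this, Function.iterate_succ_apply, show shift P = T from rfl, shift_iter2 _ (by simp)]

lemma iter_P_even {l : ℕ} (hl : 1 ≤ l) : shift^[2 * l] P = V := by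
  have : 2 * l = 2 * (l - 1) + 1 + 1 := by omega
  rw [this, Function.iterate_succ_apply, Function.iterate_succ_apply,
    show shift (shift P) = V from rfl, shift_iter2 _ (by simp)]

lemma iter_S_even {l : ℕ} : shift^[2 * l] S = S := shift_iter2 _ (by simp)
lemma iter_U_even {l : ℕ} : shift^[2 * l] U = U := shift_iter2 _ (by simp)
lemma iter_S_odd {l : ℕ} : shift^[2 * l + 1] S = U := by
  rw [Function.iterate_succ_apply, show shift S = U from rfl, iter_U_even]
lemma iter_U_odd {l : ℕ} : shift^[2 * l + 1] U = S := by
  rw [Function.iterate_succ_apply, show shift U = S from rfl, iter_S_even]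

-- the five position conditions
def Pc (i : ℕ) : Prop := ∃ k : ℕ, 1 ≤ k ∧ i = 2 * k - 1
def Tc (i : ℕ) : Prop := ∃ l k : ℕ, 1 ≤ l ∧ 1 ≤ k ∧ i = 4 ^ (2 * l - 1) * (2 * k - 1)
def Vc (i : ℕ) : Prop := ∃ l k : ℕ, 1 ≤ l ∧ 1 ≤ k ∧ i = 4 ^ (2 * l) * (2 * k - 1)
def Sc (i : ℕ) : Prop := ∃ l k : ℕ, 1 ≤ l ∧ 1 ≤ k ∧
  (i = 4 ^ (2 * l - 2) * (8 * k - 6) ∨ i = 4 ^ (2 * l - 1) * (8 * k - 2))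
def Uc (i : ℕ) : Prop := ∃ l k : ℕ, 1 ≤ l ∧ 1 ≤ k ∧
  (i = 4 ^ (2 * l - 2) * (8 * k - 2) ∨ i = 4 ^ (2 * l - 1) * (8 * k - 6))

lemma fwd_P {i : ℕ} (h : Pc i) : f i = P := by
  obtain ⟨k, hk, rfl⟩ := h; exact f_odd (by omega)

lemma fwd_T {i : ℕ} (h : Tc i) : f i = T := by
  obtain ⟨l, k, hl, hk, rfl⟩ := h
  rw [f_pow4 _ (by omega), f_odd (by omega), iter_P_odd hl]

lemma fwd_V {i : ℕ} (h : Vc i) : f i = V := by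
  obtain ⟨l, k, hl, hk, rfl⟩ := h
  rw [f_pow4 _ (by omega), f_odd (by omega), iter_P_even hl]

lemma fwd_S {i : ℕ} (h : Sc i) : f i = S := by
  obtain ⟨l, k, hl, hk, h | h⟩ := h <;> subst h
  · rw [f_pow4 _ (by omega), f_two (by omega), show 2*l-2 = 2*(l-1) by omega, iter_S_even]
  · rw [f_pow4 _ (by omega), f_six (by omega), show 2*l-1 = 2*(l-1)+1 by omega, iter_U_odd]

lemma fwd_U {i : ℕ} (h : Uc i) : f i = U := by
  obtain ⟨l, k, hl, hk, h | h⟩ := h <;> subst h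
  · rw [f_pow4 _ (by omega), f_six (by omega), show 2*l-2 = 2*(l-1) by omega, iter_U_even]
  · rw [f_pow4 _ (by omega), f_two (by omega), show 2*l-1 = 2*(l-1)+1 by omega, iter_S_odd]

lemma exhaust : ∀ i : ℕ, 1 ≤ i → Pc i ∨ Tc i ∨ Vc i ∨ Sc i ∨ Uc i := by
  intro i
  induction i using Nat.strong_induction_on with
  | _ i ih =>
  intro hi
  by_cases ho : i % 2 = 1
  · exact Or.inl ⟨(i + 1) / 2, by omega⟩
  by_cases h2 : i % 8 = 2
  · refine Or.inr (Or.inr (Or.inr (Or.inl ⟨1, (i + 6) / 8, by norm_num, by omega, Or.inl ?_⟩)))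
    norm_num; omega
  by_cases h6 : i % 8 = 6
  · refine Or.inr (Or.inr (Or.inr (Or.inr ⟨1, (i + 2) / 8, by norm_num, by omega, Or.inl ?_⟩)))
    norm_num; omega
  · have h4 : i % 4 = 0 := by omega
    obtain ⟨y, rfl⟩ : ∃ y, i = 4 * y := ⟨i / 4, by omega⟩
    have hy1 : 1 ≤ y := by omega
    rcases ih y (by omega) hy1 with ⟨k, hk, rfl⟩ | ⟨l, k, hl, hk, rfl⟩ | ⟨l, k, hl, hk, rfl⟩ |
      ⟨l, k, hl, hk, h | h⟩ | ⟨l, k, hl, hk, h | h⟩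
    · exact Or.inr (Or.inl ⟨1, k, le_refl 1, hk, by norm_num⟩)
    · refine Or.inr (Or.inr (Or.inl ⟨l, k, hl, hk, ?_⟩))
      rw [show 4 * (4 ^ (2*l-1) * (2*k-1)) = (4 ^ (2*l-1) * 4) * (2*k-1) by ring,
        ← pow_succ, show 2*l-1+1 = 2*l by omega]
    · refine Or.inr (Or.inl ⟨l + 1, k, by omega, hk, ?_⟩)
      rw [show 4 * (4 ^ (2*l) * (2*k-1)) = (4 ^ (2*l) * 4) * (2*k-1) by ring,
        ← pow_succ, show 2*l+1 = 2*(l+1)-1 by omega]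
    · subst h
      refine Or.inr (Or.inr (Or.inr (Or.inr ⟨l, k, hl, hk, Or.inr ?_⟩)))
      rw [show 4 * (4 ^ (2*l-2) * (8*k-6)) = (4 ^ (2*l-2) * 4) * (8*k-6) by ring,
        ← pow_succ, show 2*l-2+1 = 2*l-1 by omega]
    · subst h
      refine Or.inr (Or.inr (Or.inr (Or.inr ⟨l + 1, k, by omega, hk, Or.inl ?_⟩)))
      rw [show 4 * (4 ^ (2*l-1) * (8*k-2)) = (4 ^ (2*l-1) * 4) * (8*k-2) by ring,
        ← pow_succ, show 2*l-1+1 = 2*(l+1)-2 by omega]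
    · subst h
      refine Or.inr (Or.inr (Or.inr (Or.inl ⟨l, k, hl, hk, Or.inr ?_⟩)))
      rw [show 4 * (4 ^ (2*l-2) * (8*k-2)) = (4 ^ (2*l-2) * 4) * (8*k-2) by ring,
        ← pow_succ, show 2*l-2+1 = 2*l-1 by omega]
    · subst h
      refine Or.inr (Or.inr (Or.inr (Or.inl ⟨l + 1, k, by omega, hk, Or.inl ?_⟩)))
      rw [show 4 * (4 ^ (2*l-1) * (8*k-6)) = (4 ^ (2*l-1) * 4) * (8*k-6) by ring,
        ← pow_succ, show 2*l-1+1 = 2*(l+1)-2 by omega]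

lemma f_iff {i : ℕ} (hi : 1 ≤ i) :
    (f i = P ↔ Pc i) ∧ (f i = T ↔ Tc i) ∧ (f i = V ↔ Vc i) ∧
    (f i = S ↔ Sc i) ∧ (f i = U ↔ Uc i) := by
  have he := exhaust i hi
  refine ⟨⟨fun h => ?_, fwd_P⟩, ⟨fun h => ?_, fwd_T⟩, ⟨fun h => ?_, fwd_V⟩,
    ⟨fun h => ?_, fwd_S⟩, ⟨fun h => ?_, fwd_U⟩⟩ <;>
  · rcases he with hc | hc | hc | hc | hc <;>
      first
        | exact hc
        | (exfalso; first
            | exact absurd (fwd_P hc ▸ h) (by decide)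
            | exact absurd (fwd_T hc ▸ h) (by decide)
            | exact absurd (fwd_V hc ▸ h) (by decide)
            | exact absurd (fwd_S hc ▸ h) (by decide)
            | exact absurd (fwd_U hc ▸ h) (by decide))

-- middle values
lemma f_mid1 {e : ℕ} : f (2 * 4 ^ e) = if e % 2 = 0 then S else U := by
  rw [show 2 * 4 ^ e = 4 ^ e * 2 by ring, f_pow4 _ (by norm_num), f_two (by norm_num)]
  rcases Nat.even_or_odd e with ⟨t, ht⟩ | ⟨t, ht⟩
  · rw [show e = 2 * t by omega, iter_S_even]; simp [show (2*t) % 2 = 0 by omega]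
  · rw [show e = 2 * t + 1 by omega, iter_S_odd]; simp [show (2*t+1) % 2 = 1 by omega]

lemma f_mid3 {e : ℕ} : f (3 * (2 * 4 ^ e)) = if e % 2 = 0 then U else S := by
  rw [show 3 * (2 * 4 ^ e) = 4 ^ e * 6 by ring, f_pow4 _ (by norm_num), f_six (by norm_num)]
  rcases Nat.even_or_odd e with ⟨t, ht⟩ | ⟨t, ht⟩
  · rw [show e = 2 * t by omega, iter_U_even]; simp [show (2*t) % 2 = 0 by omega]
  · rw [show e = 2 * t + 1 by omega, iter_U_odd]; simp [show (2*t+1) % 2 = 1 by omega]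

lemma f_mid2 {e : ℕ} : f (2 * (2 * 4 ^ e)) = if e % 2 = 0 then T else V := by
  rw [show 2 * (2 * 4 ^ e) = 4 ^ (e + 1) * 1 by ring, f_pow4 _ (by norm_num), f_odd (by norm_num)]
  rcases Nat.even_or_odd e with ⟨t, ht⟩ | ⟨t, ht⟩
  · rw [show e + 1 = 2 * (t + 1) - 1 by omega, iter_P_odd (by omega)]
    simp [show e % 2 = 0 by omega]
  · rw [show e + 1 = 2 * (t + 1) by omega, iter_P_even (by omega)]
    simp [show e % 2 = 1 by omega]

-- one segment of an append
lemma seg {α : Type*} (A rest : List α) (c : α) (j : ℕ) :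
    (A ++ ([c] ++ rest))[j]? =
      if j < A.length then A[j]?
      else if j = A.length then some c
      else rest[j - (A.length + 1)]? := by
  rw [List.getElem?_append]
  by_cases h : j < A.length
  · simp [h]
  · simp only [h, if_false]
    rw [List.getElem?_append]
    by_cases h2 : j = A.length
    · simp [h2]
    · have h3 : ¬ (j - A.length < ([c] : List α).length) := by simp; omega
      simp only [h3, if_false]
      have h4 : j - A.length - ([c] : List α).length = j - (A.length + 1) := by
        simp only [List.length_singleton]; omega
      rw [h4, if_neg h2]

lemma step (A : List HLetter) (e : ℕ) (c1 c2 c3 : HLetter)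
    (hA : A.length = 2 * 4 ^ e - 1)
    (hAi : ∀ idx, 1 ≤ idx → idx ≤ 2 * 4 ^ e - 1 → A[idx - 1]? = some (f idx))
    (hc1 : f (2 * 4 ^ e) = c1) (hc2 : f (2 * (2 * 4 ^ e)) = c2)
    (hc3 : f (3 * (2 * 4 ^ e)) = c3) :
    (A ++ [c1] ++ A ++ [c2] ++ A ++ [c3] ++ A).length = 2 * 4 ^ (e + 1) - 1 ∧
    ∀ idx, 1 ≤ idx → idx ≤ 2 * 4 ^ (e + 1) - 1 →
      (A ++ [c1] ++ A ++ [c2] ++ A ++ [c3] ++ A)[idx - 1]? = some (f idx) := by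
  have hB : 1 ≤ 2 * 4 ^ e := by
    have := pow_pos (show (0:ℕ) < 4 by norm_num) e; omega
  have hpow : (4:ℕ) ^ (e + 1) = 4 ^ e * 4 := pow_succ 4 e
  constructor
  · simp [hA]; omega
  intro idx h1 h2
  have hassoc : A ++ [c1] ++ A ++ [c2] ++ A ++ [c3] ++ A
      = A ++ ([c1] ++ (A ++ ([c2] ++ (A ++ ([c3] ++ A))))) := by
    simp [List.append_assoc]
  rw [hassoc, seg]
  set B := 2 * 4 ^ e with hBdef
  by_cases ha1 : idx - 1 < A.length
  · rw [if_pos ha1]; exact hAi idx h1 (by omega)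
  rw [if_neg ha1]
  by_cases ha2 : idx - 1 = A.length
  · rw [if_pos ha2]
    have hidx : idx = B := by omega
    rw [hidx, hc1]
  rw [if_neg ha2, seg]
  have hd1 : idx - 1 - (A.length + 1) = (idx - B) - 1 := by omega
  have hgt1 : B < idx := by omega
  rw [hd1]
  by_cases hb1 : idx - B - 1 < A.length
  · rw [if_pos hb1]
    rw [hAi (idx - B) (by omega) (by omega)]
    congr 1
    have := f_inv e (idx - B) 1 (by omega) (by omega)
    rw [show idx - B + 2 * 4 ^ e * 1 = idx by omega] at this
    exact this.symm
  rw [if_neg hb1]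
  by_cases hb2 : idx - B - 1 = A.length
  · have hidx : idx = 2 * B := by omega
    rw [if_pos hb2, hidx, hc2]
  rw [if_neg hb2, seg]
  have hd2 : idx - B - 1 - (A.length + 1) = (idx - 2 * B) - 1 := by omega
  have hgt2 : 2 * B < idx := by omega
  rw [hd2]
  by_cases hcc1 : idx - 2 * B - 1 < A.length
  · rw [if_pos hcc1]
    rw [hAi (idx - 2 * B) (by omega) (by omega)]
    congr 1
    have := f_inv e (idx - 2 * B) 2 (by omega) (by omega)
    rw [show idx - 2 * B + 2 * 4 ^ e * 2 = idx by omega] at this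
    exact this.symm
  rw [if_neg hcc1]
  by_cases hcc2 : idx - 2 * B - 1 = A.length
  · have hidx : idx = 3 * B := by omega
    rw [if_pos hcc2, hidx, hc3]
  rw [if_neg hcc2]
  have hd3 : idx - 2 * B - 1 - (A.length + 1) = (idx - 3 * B) - 1 := by omega
  have hgt3 : 3 * B < idx := by omega
  rw [hd3]
  rw [hAi (idx - 3 * B) (by omega) (by omega)]
  congr 1
  have := f_inv e (idx - 3 * B) 3 (by omega) (by omega)
  rw [show idx - 3 * B + 2 * 4 ^ e * 3 = idx by omega] at this
  exact this.symm

lemma Kmain (K : ℕ → List HLetter)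
    (hK2 : K 2 = [P])
    (hodd : ∀ m : ℕ, 1 ≤ m →
      K (2 * m + 1) = K (2 * m) ++ [S] ++ K (2 * m) ++ [T] ++ K (2 * m) ++ [U] ++ K (2 * m))
    (heven : ∀ m : ℕ, 2 ≤ m →
      K (2 * m) = K (2 * m - 1) ++ [U] ++ K (2 * m - 1) ++ [V] ++ K (2 * m - 1)
        ++ [S] ++ K (2 * m - 1)) :
    ∀ n : ℕ, 2 ≤ n → (K n).length = 2 * 4 ^ (n - 2) - 1 ∧
      ∀ idx, 1 ≤ idx → idx ≤ 2 * 4 ^ (n - 2) - 1 → (K n)[idx - 1]? = some (f idx) := by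
  intro n hn
  induction n, hn using Nat.le_induction with
  | base =>
    refine ⟨by simp [hK2], ?_⟩
    intro idx h1 h2
    have : idx = 1 := by norm_num at h2; omega
    subst this
    simp [hK2, f_odd (show 1 % 2 = 1 by norm_num)]
  | succ n hn ih =>
    have hexp : n + 1 - 2 = (n - 2) + 1 := by omega
    rcases Nat.even_or_odd n with ⟨m, hm⟩ | ⟨m, hm⟩
    · -- n even, n = 2m, use hodd
      have hm1 : 1 ≤ m := by omega
      have heq := hodd m hm1
      rw [show 2 * m = n by omega] at heq
      have hpar : (n - 2) % 2 = 0 := by omega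
      have hc1 : f (2 * 4 ^ (n - 2)) = S := by rw [f_mid1, if_pos hpar]
      have hc2 : f (2 * (2 * 4 ^ (n - 2))) = T := by rw [f_mid2, if_pos hpar]
      have hc3 : f (3 * (2 * 4 ^ (n - 2))) = U := by rw [f_mid3, if_pos hpar]
      rw [heq, hexp]
      exact step (K n) (n - 2) S T U ih.1 ih.2 hc1 hc2 hc3
    · -- n odd, n + 1 = 2(m+1), use heven
      have hm1 : 2 ≤ m + 1 := by omega
      have heq := heven (m + 1) hm1
      rw [show 2 * (m + 1) - 1 = n by omega, show 2 * (m + 1) = n + 1 by omega] at heq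
      have hpar : (n - 2) % 2 = 1 := by omega
      have hc1 : f (2 * 4 ^ (n - 2)) = U := by rw [f_mid1, if_neg (by omega)]
      have hc2 : f (2 * (2 * 4 ^ (n - 2))) = V := by rw [f_mid2, if_neg (by omega)]
      have hc3 : f (3 * (2 * 4 ^ (n - 2))) = S := by rw [f_mid3, if_neg (by omega)]
      rw [heq, hexp]
      exact step (K n) (n - 2) U V S ih.1 ih.2 hc1 hc2 hc3

open HLetter in
/-- Positions of each letter in the Hilbert letter word `K n` (1-indexed). -/
theorem hilbert_letter_positions (K : ℕ → List HLetter)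
    (hK2 : K 2 = [P])
    (hodd : ∀ m : ℕ, 1 ≤ m →
      K (2 * m + 1) = K (2 * m) ++ [S] ++ K (2 * m) ++ [T] ++ K (2 * m) ++ [U] ++ K (2 * m))
    (heven : ∀ m : ℕ, 2 ≤ m →
      K (2 * m) = K (2 * m - 1) ++ [U] ++ K (2 * m - 1) ++ [V] ++ K (2 * m - 1)
        ++ [S] ++ K (2 * m - 1)) :
    ∀ n : ℕ, 2 ≤ n → ∀ idx : ℕ, 1 ≤ idx → idx ≤ 2 * 4 ^ (n - 2) - 1 →
      ((K n)[idx - 1]? = some P ↔ ∃ k : ℕ, 1 ≤ k ∧ idx = 2 * k - 1) ∧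
      ((K n)[idx - 1]? = some T ↔
        ∃ l k : ℕ, 1 ≤ l ∧ 1 ≤ k ∧ idx = 4 ^ (2 * l - 1) * (2 * k - 1)) ∧
      ((K n)[idx - 1]? = some V ↔
        ∃ l k : ℕ, 1 ≤ l ∧ 1 ≤ k ∧ idx = 4 ^ (2 * l) * (2 * k - 1)) ∧
      ((K n)[idx - 1]? = some S ↔
        ∃ l k : ℕ, 1 ≤ l ∧ 1 ≤ k ∧
          (idx = 4 ^ (2 * l - 2) * (8 * k - 6) ∨ idx = 4 ^ (2 * l - 1) * (8 * k - 2))) ∧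
      ((K n)[idx - 1]? = some U ↔
        ∃ l k : ℕ, 1 ≤ l ∧ 1 ≤ k ∧
          (idx = 4 ^ (2 * l - 2) * (8 * k - 2) ∨ idx = 4 ^ (2 * l - 1) * (8 * k - 6))) := by
  intro n hn idx h1 h2
  have hval := (Kmain K hK2 hodd heven n hn).2 idx h1 h2
  rw [hval]
  have hf := f_iff h1
  simp only [Option.some.injEq]
  exact ⟨hf.1, hf.2.1, hf.2.2.1, hf.2.2.2.1, hf.2.2.2.2⟩
end
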